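/- Let {Π_i : 𝔄 → 𝔄_i, i ∈ I} be a strictly norming family of unital *-homomorphisms of unital C*-algebras. Then an element a ∈ 𝔄 is invertible if and only if Π_i(a) is invertible in 𝔄_i for every i ∈ I, and consequently sp(a) = ⋃_{i∈I} sp(Π_i(a)). -/
import Mathlib

section Aux

/-- In a monoid, if `x * a = 1` and `a * y = 1` then `a` is a unit. -/
lemma aux_isUnit_of_left_right {M : Type*} [Monoid M] {a x y : M}
    (hx : x * a = 1) (hy : a * y = 1) : IsUnit a := by
  have hxy : x = y := by
    calc x = x * (a * y) := by rw [hy, mul_one]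
    _ = (x * a) * y := by rw [mul_assoc]
    _ = y := by rw [hx, one_mul]
  exact ⟨⟨a, y, hy, hxy ▸ hx⟩, rfl⟩

/-- If `star a * a` and `a * star a` are both units, then `a` is a unit. -/
lemma aux_isUnit_of_star {A : Type*} [Monoid A] [StarMul A] {a : A}
    (h1 : IsUnit (star a * a)) (h2 : IsUnit (a * star a)) : IsUnit a := by
  refine aux_isUnit_of_left_right (x := ↑h1.unit⁻¹ * star a) (y := star a * ↑h2.unit⁻¹) ?_ ?_
  · rw [mul_assoc]
    nth_rw 2 [show star a * a = ↑h1.unit from h1.unit_spec.symm]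
    exact Units.inv_mul _
  · rw [← mul_assoc]
    nth_rw 1 [show a * star a = ↑h2.unit from h2.unit_spec.symm]
    exact Units.mul_inv _

variable {A : Type*} [CStarAlgebra A] [PartialOrder A] [StarOrderedRing A]

/-- If `h ≥ 0` is not invertible, then `‖‖h‖ - h‖ = ‖h‖`. -/
lemma aux_norm_eq [Nontrivial A] {h : A} (hh : 0 ≤ h) (h0 : ¬ IsUnit h) :
    ‖algebraMap ℝ A ‖h‖ - h‖ = ‖h‖ := by
  have hsa : IsSelfAdjoint h := .of_nonneg hh
  have hz : (0 : A) ≤ algebraMap ℝ A ‖h‖ - h :=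
    sub_nonneg.2 hsa.le_algebraMap_norm_self
  refine le_antisymm ?_ ?_
  · rw [CStarAlgebra.norm_le_iff_le_algebraMap _ (norm_nonneg h) hz]
    exact sub_le_self _ hh
  · have h0' : (0 : ℝ) ∈ spectrum ℝ h := (spectrum.zero_mem_iff ℝ).2 h0
    have hmem : ‖h‖ ∈ spectrum ℝ (algebraMap ℝ A ‖h‖ - h) := by
      rw [← spectrum.singleton_sub_eq]
      simpa using Set.sub_mem_sub (Set.mem_singleton ‖h‖) h0'
    simpa using spectrum.norm_le_norm_of_mem hmem

/-- Conversely, if `0 ≤ y`, `‖y‖ ≤ c` and `‖c - y‖ = c`, then `y` is not invertible. -/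
lemma aux_not_isUnit [Nontrivial A] {y : A} {c : ℝ} (hy : 0 ≤ y) (hc : ‖y‖ ≤ c)
    (hn : ‖algebraMap ℝ A c - y‖ = c) : ¬ IsUnit y := by
  have hc0 : (0 : ℝ) ≤ c := (norm_nonneg y).trans hc
  have hz : (0 : A) ≤ algebraMap ℝ A c - y :=
    sub_nonneg.2 ((CStarAlgebra.norm_le_iff_le_algebraMap y hc0 hy).mp hc)
  have hmem := CStarAlgebra.norm_mem_spectrum_of_nonneg hz
  rw [hn, ← spectrum.singleton_sub_eq] at hmem
  obtain ⟨r, hr, s, hs, hrs⟩ := hmem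
  rw [Set.mem_singleton_iff] at hr
  subst hr
  have hs0 : s = 0 := by linarith [sub_eq_iff_eq_add.mp hrs]
  intro hu
  exact (spectrum.zero_notMem_iff ℝ).2 hu (hs0 ▸ hs)

end Aux

/-- For a strictly norming family of unital *-homomorphisms `P i : A → B i` of unital
C*-algebras, an element `a ∈ A` is invertible iff every `P i a` is invertible, and
consequently `sp(a) = ⋃ i sp(P i a)`. -/
theorem stmt11 (A : Type*) [NormedRing A] [StarRing A] [CStarRing A]
    [NormedAlgebra ℂ A] [StarModule ℂ A] [CompleteSpace A] [NormOneClass A]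
    {I : Type*} (B : I → Type*) [∀ i, NormedRing (B i)] [∀ i, StarRing (B i)]
    [∀ i, CStarRing (B i)] [∀ i, NormedAlgebra ℂ (B i)] [∀ i, StarModule ℂ (B i)]
    [∀ i, CompleteSpace (B i)] [∀ i, NormOneClass (B i)]
    (P : ∀ i, A →⋆ₐ[ℂ] B i)
    (hsn : ∀ a : A, ∃ k, ‖a‖ = ‖P k a‖) :
    (∀ a : A, IsUnit a ↔ ∀ i, IsUnit (P i a)) ∧
    (∀ a : A, spectrum ℂ a = ⋃ i, spectrum ℂ (P i a)) := by
  letI : CStarAlgebra A :=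
    { ‹NormedRing A›, ‹StarRing A›, ‹CStarRing A›, ‹NormedAlgebra ℂ A›,
      ‹StarModule ℂ A›, ‹CompleteSpace A› with }
  letI : ∀ i, CStarAlgebra (B i) := fun i =>
    { ‹∀ i, NormedRing (B i)› i, ‹∀ i, StarRing (B i)› i, ‹∀ i, CStarRing (B i)› i,
      ‹∀ i, NormedAlgebra ℂ (B i)› i, ‹∀ i, StarModule ℂ (B i)› i,
      ‹∀ i, CompleteSpace (B i)› i with }
  letI : PartialOrder A := CStarAlgebra.spectralOrder A
  haveI : StarOrderedRing A := CStarAlgebra.spectralOrderedRing A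
  letI : ∀ i, PartialOrder (B i) := fun i => CStarAlgebra.spectralOrder (B i)
  haveI : ∀ i, StarOrderedRing (B i) := fun i => CStarAlgebra.spectralOrderedRing (B i)
  haveI : Nontrivial A := ⟨⟨1, 0, fun h => by simpa [h] using (norm_one (α := A))⟩⟩
  haveI : ∀ i, Nontrivial (B i) := fun i =>
    ⟨⟨1, 0, fun h => by simpa [h] using (norm_one (α := B i))⟩⟩
  have key : ∀ a : A, IsUnit a ↔ ∀ i, IsUnit (P i a) := by
    intro a
    constructor
    · intro ha i
      exact ha.map (P i)
    · intro hall
      by_contra ha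
      -- one of `star a * a`, `a * star a` is not a unit
      have : ¬ IsUnit (star a * a) ∨ ¬ IsUnit (a * star a) := by
        by_contra hcon
        push_neg at hcon
        exact ha (aux_isUnit_of_star hcon.1 hcon.2)
      -- reduce to a nonnegative non-invertible element whose images are units
      obtain ⟨h, hh, h0, hhu⟩ : ∃ h : A, 0 ≤ h ∧ ¬ IsUnit h ∧ ∀ i, IsUnit (P i h) := by
        rcases this with h1 | h2
        · exact ⟨star a * a, star_mul_self_nonneg a, h1, fun i => by
            simpa [map_mul, map_star] using ((hall i).star.mul (hall i))⟩
        · exact ⟨a * star a, mul_star_self_nonneg a, h2, fun i => by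
            simpa [map_mul, map_star] using ((hall i).mul (hall i).star)⟩
      have hnorm := aux_norm_eq hh h0
      obtain ⟨k, hk⟩ := hsn (algebraMap ℝ A ‖h‖ - h)
      have hmap : P k (algebraMap ℝ A ‖h‖ - h) = algebraMap ℝ (B k) ‖h‖ - P k h := by
        rw [map_sub, IsScalarTower.algebraMap_apply ℝ ℂ A, AlgHomClass.commutes,
          ← IsScalarTower.algebraMap_apply ℝ ℂ (B k)]
      have hPh : (0 : B k) ≤ P k h := by
        have hsq : P k h = star (P k (CFC.sqrt h)) * P k (CFC.sqrt h) := by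
          conv_lhs => rw [← CFC.sqrt_mul_sqrt_self h hh]
          rw [map_mul, ← map_star, (IsSelfAdjoint.of_nonneg (CFC.sqrt_nonneg (a := h))).star_eq]
        rw [hsq]
        exact star_mul_self_nonneg _
      have hle : ‖P k h‖ ≤ ‖h‖ := NonUnitalStarAlgHom.norm_apply_le (P k) h
      exact aux_not_isUnit hPh hle (by rw [← hmap, ← hk, hnorm]) (hhu k)
  refine ⟨key, fun a => ?_⟩
  ext lam
  simp only [Set.mem_iUnion, spectrum.mem_iff]
  rw [← not_forall_not]
  push_neg
  constructor
  · intro hna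
    by_contra hc
    push_neg at hc
    exact hna ((key _).2 fun i => by simpa [map_sub, AlgHomClass.commutes] using hc i)
  · rintro ⟨i, hi⟩ hu
    exact hi (by simpa [map_sub, AlgHomClass.commutes] using hu.map (P i))
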